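/- arXiv:1709.05960 — 2 statements merged into one kernel-verified Lean document; each statement's English description precedes it below -/
import Mathlib

section
/- The function T₁(x) := (x/(π − x))·cot(x/2) is strictly convex on (0, π), i.e., T₁''(x) > 0 for all x ∈ (0, π). -/
/-!
Write `s = sin (x / 2)`, `c = cos (x / 2)`. Differentiating twice gives
`T₁' x = (π sin x - x (π - x)) / ((π - x)² (1 - cos x))` and
`T₁'' x = 2 (π - x) s N(x) / ((π - x)² (1 - cos x))²` with
`N(x) = 4π c s² - 2π (π - x) s + x (π - x)² c`, so it suffices that `N > 0` on `(0, π)`.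
This follows from the alternating Taylor bounds for `sin` and `cos` on `[0, ∞)`, which reduce it to
polynomial inequalities: for `x ≤ π - 2` one expands in `x / 2`, and for `x ≥ π - 2` in
`σ = (π - x) / 2 ≤ 1`, where `N = 4 ((π - 2σ) σ² sin σ - π cos σ (σ - sin (2σ) / 2))`.
-/

open Real Finset
open scoped Nat

noncomputable def sinTaylor (n : ℕ) (u : ℝ) : ℝ :=
  ∑ k ∈ range n, (-1) ^ k * u ^ (2 * k + 1) / (2 * k + 1)!

noncomputable def cosTaylor (n : ℕ) (u : ℝ) : ℝ :=
  ∑ k ∈ range n, (-1) ^ k * u ^ (2 * k) / (2 * k)!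

theorem hasDerivAt_sinTaylor (n : ℕ) (u : ℝ) :
    HasDerivAt (sinTaylor n) (cosTaylor n u) u := by
  unfold sinTaylor cosTaylor
  refine HasDerivAt.fun_sum fun k _ => ?_
  refine (((hasDerivAt_pow (2 * k + 1) u).const_mul ((-1 : ℝ) ^ k)).div_const
    ((2 * k + 1)! : ℝ)).congr_deriv ?_
  rw [Nat.factorial_succ]
  push_cast
  field_simp

theorem hasDerivAt_cosTaylor_succ (n : ℕ) (u : ℝ) :
    HasDerivAt (cosTaylor (n + 1)) (-sinTaylor n u) u := by
  have : cosTaylor (n + 1) =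
      fun v => ∑ k ∈ range n, (-1 : ℝ) ^ (k + 1) * v ^ (2 * k + 2) / (2 * k + 2)! + 1 := by
    funext v
    simp [cosTaylor, Finset.sum_range_succ', mul_add, pow_succ]
  rw [this, sinTaylor, ← Finset.sum_neg_distrib]
  refine (HasDerivAt.fun_sum fun k _ => ?_).add_const 1
  refine (((hasDerivAt_pow (2 * k + 2) u).const_mul ((-1 : ℝ) ^ (k + 1))).div_const
    ((2 * k + 2)! : ℝ)).congr_deriv ?_
  rw [show 2 * k + 2 = (2 * k + 1) + 1 by ring, Nat.factorial_succ]
  push_cast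
  field_simp
  ring

theorem nonneg_of_hasDerivAt_of_nonneg {f f' : ℝ → ℝ} (hf : ∀ u, HasDerivAt f (f' u) u)
    (h0 : 0 ≤ f 0) (hf' : ∀ u, 0 ≤ u → 0 ≤ f' u) {u : ℝ} (hu : 0 ≤ u) : 0 ≤ f u := by
  have hmono : MonotoneOn f (Set.Ici 0) :=
    monotoneOn_of_hasDerivWithinAt_nonneg (convex_Ici 0)
      (fun x _ => (hf x).continuousAt.continuousWithinAt)
      (fun x _ => (hf x).hasDerivWithinAt)
      (fun x hx => hf' x (interior_subset hx))
  exact h0.trans (hmono Set.self_mem_Ici hu hu)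

theorem neg_one_pow_mul_sinTaylor_sub_sin_nonneg_of_cos {n : ℕ}
    (hcos : ∀ v, 0 ≤ v → 0 ≤ (-1) ^ n * (cosTaylor (n + 1) v - cos v)) {u : ℝ} (hu : 0 ≤ u) :
    0 ≤ (-1) ^ n * (sinTaylor (n + 1) u - sin u) :=
  nonneg_of_hasDerivAt_of_nonneg
    (fun v => ((hasDerivAt_sinTaylor (n + 1) v).sub (hasDerivAt_sin v)).const_mul _)
    (by simp [sinTaylor]) hcos hu

theorem neg_one_pow_mul_cosTaylor_sub_cos_nonneg (n : ℕ) {u : ℝ} (hu : 0 ≤ u) :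
    0 ≤ (-1) ^ n * (cosTaylor (n + 1) u - cos u) := by
  induction n generalizing u with
  | zero => simpa [cosTaylor] using cos_le_one u
  | succ n ih =>
    refine nonneg_of_hasDerivAt_of_nonneg
      (fun v => ((hasDerivAt_cosTaylor_succ (n + 1) v).sub (hasDerivAt_cos v)).const_mul _)
      (by simp [cosTaylor, Finset.sum_range_succ']) (fun v hv => ?_) hu
    have := neg_one_pow_mul_sinTaylor_sub_sin_nonneg_of_cos (fun _ hw => ih hw) hv
    rw [pow_succ]
    linarith

theorem neg_one_pow_mul_sinTaylor_sub_sin_nonneg (n : ℕ) {u : ℝ} (hu : 0 ≤ u) :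
    0 ≤ (-1) ^ n * (sinTaylor (n + 1) u - sin u) :=
  neg_one_pow_mul_sinTaylor_sub_sin_nonneg_of_cos
    (fun _ hv => neg_one_pow_mul_cosTaylor_sub_cos_nonneg n hv) hu

theorem sin_eq_two_mul_sin_half_mul_cos_half (x : ℝ) :
    sin x = 2 * sin (x / 2) * cos (x / 2) := by
  rw [← sin_two_mul, mul_div_cancel₀ x two_ne_zero]

theorem cos_eq_one_sub_two_mul_sin_half_sq (x : ℝ) : cos x = 1 - 2 * sin (x / 2) ^ 2 := by
  rw [← cos_two_mul_eq_one_sub, mul_div_cancel₀ x two_ne_zero]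

theorem Real.hasDerivAt_cot {x : ℝ} (hx : sin x ≠ 0) : HasDerivAt cot (-1 / sin x ^ 2) x := by
  have hcot : cot = fun y => cos y / sin y := funext cot_eq_cos_div_sin
  rw [hcot]
  refine ((hasDerivAt_cos x).div (hasDerivAt_sin x) hx).congr_deriv ?_
  rw [← sin_sq_add_cos_sq x]
  ring

noncomputable def T₁ (x : ℝ) : ℝ := x / (π - x) * cot (x / 2)

noncomputable def T₁Deriv (x : ℝ) : ℝ :=
  (π * sin x - x * (π - x)) / ((π - x) ^ 2 * (1 - cos x))

noncomputable def curvatureFactor (x : ℝ) : ℝ :=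
  4 * π * cos (x / 2) * sin (x / 2) ^ 2 - 2 * π * (π - x) * sin (x / 2)
    + x * (π - x) ^ 2 * cos (x / 2)

theorem sin_half_pos {x : ℝ} (hx : x ∈ Set.Ioo 0 π) : 0 < sin (x / 2) :=
  sin_pos_of_pos_of_lt_pi (by linarith [hx.1]) (by linarith [hx.2, pi_pos])

theorem hasDerivAt_T₁ {x : ℝ} (hx : x ∈ Set.Ioo 0 π) : HasDerivAt T₁ (T₁Deriv x) x := by
  have hs := (sin_half_pos hx).ne'
  have hπx : π - x ≠ 0 := sub_ne_zero.2 hx.2.ne'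
  have hfrac : HasDerivAt (fun y => y / (π - y)) (π / (π - x) ^ 2) x := by
    refine ((hasDerivAt_id' x).div ((hasDerivAt_id' x).const_sub π) hπx).congr_deriv ?_
    ring
  have hcot : HasDerivAt (fun y => cot (y / 2)) (-1 / sin (x / 2) ^ 2 * (1 / 2)) x :=
    HasDerivAt.comp (h₂ := cot) x (Real.hasDerivAt_cot hs) ((hasDerivAt_id' x).div_const 2)
  refine (hfrac.mul hcot).congr_deriv ?_
  rw [T₁Deriv, sin_eq_two_mul_sin_half_mul_cos_half x, cos_eq_one_sub_two_mul_sin_half_sq x,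
    cot_eq_cos_div_sin]
  field_simp
  ring

theorem hasDerivAt_T₁Deriv {x : ℝ} (hx : x ∈ Set.Ioo 0 π) :
    HasDerivAt T₁Deriv
      (2 * (π - x) * sin (x / 2) * curvatureFactor x / ((π - x) ^ 2 * (1 - cos x)) ^ 2) x := by
  have hs := sin_half_pos hx
  have hπx : π - x ≠ 0 := sub_ne_zero.2 hx.2.ne'
  have hden : (π - x) ^ 2 * (1 - cos x) ≠ 0 := by
    rw [cos_eq_one_sub_two_mul_sin_half_sq x, sub_sub_cancel]
    positivity
  have hnum : HasDerivAt (fun y => π * sin y - y * (π - y)) (π * cos x - π + 2 * x) x := by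
    refine (((hasDerivAt_sin x).const_mul π).sub
      ((hasDerivAt_id' x).mul ((hasDerivAt_id' x).const_sub π))).congr_deriv ?_
    ring
  have hdenom : HasDerivAt (fun y => (π - y) ^ 2 * (1 - cos y))
      (-2 * (π - x) * (1 - cos x) + (π - x) ^ 2 * sin x) x := by
    refine ((((hasDerivAt_id' x).const_sub π).fun_pow 2).mul
      ((hasDerivAt_cos x).const_sub 1)).congr_deriv ?_
    ring
  refine (hnum.div hdenom hden).congr_deriv ?_
  rw [curvatureFactor, sin_eq_two_mul_sin_half_mul_cos_half x,
    cos_eq_one_sub_two_mul_sin_half_sq x]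
  congr 1
  linear_combination (-4 * π * sin (x / 2) ^ 2 * (π - x) ^ 2) * sin_sq_add_cos_sq (x / 2)

theorem taylor_polynomial_pos_of_le_pi_sub_two {x : ℝ} (h0 : 0 < x) (h1 : x ≤ π - 2) :
    0 < x * (π - x) ^ 2 * (1 - x ^ 2 / 8)
      - 2 * π * (x / 2 - x ^ 3 / 48 + x ^ 5 / 3840) * (π - 2 * x + x ^ 3 / 6) := by
  have hpu : π < 3.1415927 := lt_trans pi_lt_d20 (by norm_num)
  have hp2 : π ^ 2 < 9.8696045 := by nlinarith [pi_lt_d20, pi_gt_d2]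
  have hx2 : x ^ 2 ≤ 1.3032346 := by nlinarith
  have hx3 : 0 < x ^ 3 := by positivity
  have hkey : x * (π - x) ^ 2 * (1 - x ^ 2 / 8)
        - 2 * π * (x / 2 - x ^ 3 / 48 + x ^ 5 / 3840) * (π - 2 * x + x ^ 3 / 6)
      = x ^ 3 / 2 * (2 - π ^ 2 / 6) - x ^ 5 / 8 * (1 + π ^ 2 / 240)
        + π * x ^ 6 * (92 - x ^ 2) / 11520 := by ring
  rw [hkey]
  have h6 : 0 ≤ π * x ^ 6 * (92 - x ^ 2) / 11520 := by
    have : 0 ≤ 92 - x ^ 2 := by linarith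
    positivity
  have c4 : x ^ 5 / 8 * (1 + π ^ 2 / 240) ≤ 1.3032346 * x ^ 3 / 8 * 1.0411234 := by
    have : x ^ 5 ≤ 1.3032346 * x ^ 3 := by nlinarith [mul_le_mul_of_nonneg_left hx2 hx3.le]
    exact mul_le_mul (by linarith) (by nlinarith) (by positivity) (by positivity)
  have c5 : x ^ 3 / 6 * π ^ 2 ≤ x ^ 3 / 6 * 9.8696045 :=
    mul_le_mul_of_nonneg_left hp2.le (by positivity)
  nlinarith

theorem curvatureFactor_pos_of_le_pi_sub_two {x : ℝ} (h0 : 0 < x) (h1 : x ≤ π - 2) :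
    0 < curvatureFactor x := by
  have hpi : π ≤ 4 := pi_le_four
  have hs0 : 0 ≤ sin (x / 2) := (sin_half_pos ⟨h0, by linarith⟩).le
  have hc : 1 - x ^ 2 / 8 ≤ cos (x / 2) := by
    have := one_sub_sq_div_two_le_cos (x := x / 2)
    linarith
  have hs : sin (x / 2) ≤ x / 2 - x ^ 3 / 48 + x ^ 5 / 3840 := by
    have := neg_one_pow_mul_sinTaylor_sub_sin_nonneg 2 (by linarith : 0 ≤ x / 2)
    norm_num [sinTaylor, Finset.sum_range_succ, Nat.factorial] at this
    linarith
  have hsin_lo : π - x - sin x ≤ π - 2 * x + x ^ 3 / 6 := by linarith [sin_ge_sub_cube h0.le]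
  have hsin_hi : 0 ≤ π - x - sin x := by linarith [sin_le h0.le]
  have hdefect : sin (x / 2) * (π - x - sin x)
      ≤ (x / 2 - x ^ 3 / 48 + x ^ 5 / 3840) * (π - 2 * x + x ^ 3 / 6) :=
    mul_le_mul hs hsin_lo hsin_hi (by linarith)
  have hmain : x * (π - x) ^ 2 * (1 - x ^ 2 / 8) ≤ x * (π - x) ^ 2 * cos (x / 2) :=
    mul_le_mul_of_nonneg_left hc (by positivity)
  have hcf : curvatureFactor x
      = x * (π - x) ^ 2 * cos (x / 2) - 2 * π * (sin (x / 2) * (π - x - sin x)) := by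
    rw [curvatureFactor, sin_eq_two_mul_sin_half_mul_cos_half x]
    ring
  nlinarith [taylor_polynomial_pos_of_le_pi_sub_two h0 h1]

-- At `σ = 1` the margin is only about `0.02`; this is why `sin (2σ)` is expanded to seventh order
-- in `curvatureFactor_pi_sub_two_mul_pos`.
theorem taylor_polynomial_pos_of_le_one {σ : ℝ} (h0 : 0 < σ) (h1 : σ ≤ 1) :
    0 < π * (1 / 3 + 3 / 10 * σ ^ 2 - 3 / 28 * σ ^ 4 + σ ^ 6 / 84 - σ ^ 8 / 1890)
      - 2 * σ + σ ^ 3 / 3 := by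
  have hpl : (3.141592 : ℝ) < π := pi_gt_d6
  have hA : 0 ≤ 1 / 3 + 3 / 10 * σ ^ 2 - 3 / 28 * σ ^ 4 + σ ^ 6 / 84 - σ ^ 8 / 1890 := by
    nlinarith [pow_le_one₀ h0.le h1 (n := 4), pow_le_one₀ h0.le h1 (n := 8), sq_nonneg σ,
      pow_nonneg h0.le 6]
  have hu : 0 ≤ 1 - σ := by linarith
  have key : 0 < 3.141592 * (1 / 3 + 3 / 10 * σ ^ 2 - 3 / 28 * σ ^ 4 + σ ^ 6 / 84 - σ ^ 8 / 1890)
      - 2 * σ + σ ^ 3 / 3 := by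
    nlinarith [mul_nonneg h0.le (pow_nonneg hu 4), mul_nonneg h0.le (pow_nonneg hu 5),
      mul_nonneg h0.le (pow_nonneg hu 6), mul_nonneg h0.le (pow_nonneg hu 7),
      pow_nonneg hu 2, pow_nonneg hu 3, pow_nonneg hu 4, pow_nonneg hu 5,
      pow_nonneg hu 6, pow_nonneg hu 7, pow_nonneg hu 8, h0.le,
      mul_nonneg h0.le (pow_nonneg hu 2), mul_nonneg h0.le (pow_nonneg hu 3)]
  nlinarith [mul_le_mul_of_nonneg_right hpl.le hA]

theorem curvatureFactor_pi_sub_two_mul_pos {σ : ℝ} (h0 : 0 < σ) (h1 : σ ≤ 1) :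
    0 < curvatureFactor (π - 2 * σ) := by
  have hpi : 3 < π := pi_gt_three
  have hS : σ - σ ^ 3 / 6 ≤ sin σ := sin_ge_sub_cube h0.le
  have hC0 : 0 ≤ cos σ := cos_nonneg_of_mem_Icc ⟨by linarith, by linarith⟩
  have hC : cos σ ≤ 1 - σ ^ 2 / 2 + σ ^ 4 / 24 := by
    have := neg_one_pow_mul_cosTaylor_sub_cos_nonneg 2 h0.le
    norm_num [cosTaylor, Finset.sum_range_succ, Nat.factorial] at this
    linarith
  have hsin_lo : 2 * σ - 4 / 3 * σ ^ 3 + 4 / 15 * σ ^ 5 - 8 / 315 * σ ^ 7 ≤ sin (2 * σ) := by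
    have := neg_one_pow_mul_sinTaylor_sub_sin_nonneg 3 (by linarith : 0 ≤ 2 * σ)
    norm_num [sinTaylor, Finset.sum_range_succ, Nat.factorial] at this
    linarith
  have hsin_hi : sin (2 * σ) ≤ 2 * σ := sin_le (by linarith)
  have hdefect : cos σ * (σ - sin (2 * σ) / 2)
      ≤ (1 - σ ^ 2 / 2 + σ ^ 4 / 24) * (2 / 3 * σ ^ 3 - 2 / 15 * σ ^ 5 + 4 / 315 * σ ^ 7) :=
    mul_le_mul hC (by linarith) (by linarith) (by linarith)
  have hmain : (π - 2 * σ) * σ ^ 2 * (σ - σ ^ 3 / 6) ≤ (π - 2 * σ) * σ ^ 2 * sin σ :=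
    mul_le_mul_of_nonneg_left hS (mul_nonneg (by linarith) (sq_nonneg σ))
  have hcf : curvatureFactor (π - 2 * σ)
      = 4 * ((π - 2 * σ) * σ ^ 2 * sin σ - π * (cos σ * (σ - sin (2 * σ) / 2))) := by
    rw [curvatureFactor, show (π - 2 * σ) / 2 = π / 2 - σ by ring, sin_pi_div_two_sub,
      cos_pi_div_two_sub, sin_two_mul]
    ring
  have hpoly : (π - 2 * σ) * σ ^ 2 * (σ - σ ^ 3 / 6)
      - π * ((1 - σ ^ 2 / 2 + σ ^ 4 / 24) * (2 / 3 * σ ^ 3 - 2 / 15 * σ ^ 5 + 4 / 315 * σ ^ 7))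
      = σ ^ 3 * (π * (1 / 3 + 3 / 10 * σ ^ 2 - 3 / 28 * σ ^ 4 + σ ^ 6 / 84 - σ ^ 8 / 1890)
        - 2 * σ + σ ^ 3 / 3) := by ring
  have := mul_pos (pow_pos h0 3) (taylor_polynomial_pos_of_le_one h0 h1)
  nlinarith [mul_le_mul_of_nonneg_left hdefect pi_pos.le]

theorem curvatureFactor_pos {x : ℝ} (hx : x ∈ Set.Ioo 0 π) : 0 < curvatureFactor x := by
  rcases le_or_gt x (π - 2) with h | h
  · exact curvatureFactor_pos_of_le_pi_sub_two hx.1 h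
  · have := curvatureFactor_pi_sub_two_mul_pos (σ := (π - x) / 2)
      (by linarith [hx.2]) (by linarith)
    rwa [show π - 2 * ((π - x) / 2) = x by ring] at this

theorem stmt_5 :
    ∀ x ∈ Set.Ioo (0 : ℝ) π,
      0 < deriv (deriv (fun x : ℝ => x / (π - x) * Real.cot (x / 2))) x := by
  intro x hx
  have hderiv : deriv T₁ =ᶠ[nhds x] T₁Deriv :=
    Filter.eventually_of_mem (isOpen_Ioo.mem_nhds hx) fun y hy => (hasDerivAt_T₁ hy).deriv
  change 0 < deriv (deriv T₁) x
  rw [hderiv.deriv_eq, (hasDerivAt_T₁Deriv hx).deriv]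
  have hπx : 0 < π - x := sub_pos.2 hx.2
  have hs := sin_half_pos hx
  have hden : 0 < 1 - cos x := by
    rw [cos_eq_one_sub_two_mul_sin_half_sq x, sub_sub_cancel]
    positivity
  have := curvatureFactor_pos hx
  positivity
end

section
/- For s > 2 and θ̄₂ ∈ (0, (s−2)π/s), define ĝ_s(θ̄₂) := [2(θ̄₂²(1+s) − (s−1)π²)·cot(θ̄₂/2) + θ̄₂(θ̄₂ − π)(θ̄₂(1+s) + π(1−s))·csc²(θ̄₂/2)]/(θ̄₂ − π)². Then ĝ_s is strictly decreasing on (0, (s−2)π/s] whenever (s−1)π/(s+1) > θ̄₂, i.e., ĝ_s'(θ̄₂) < 0 for θ̄₂ in (0, (s−2)π/s) with θ̄₂ < (s−1)π/(s+1). -/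
/-!
The derivative of ĝ_s factors as `-((s-1)π - (1+s)t) · csc²(t/2) / (π-t)³` times
`(π-t)² t cot(t/2) + 2π(t + sin t - π)`. The first factor is positive because
`t < (s-1)π/(s+1)`. Multiplied by `2 sin²(t/2)`, the bracket becomes
`(π-t)² t sin t - 2π(π - t - sin t)(1 - cos t)`, which is positive on `(0, π)`: on `(0, 2]` by
the Taylor bounds of degree 7 for `sin` and 6 for `cos`, on `[2, π)` by those of degree 3 and 4
at `π - t`, each case reducing to a polynomial inequality.
-/

open Real

lemma le_of_map_zero_le_of_deriv_le {f g : ℝ → ℝ} (hf : Differentiable ℝ f)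
    (hg : Differentiable ℝ g) (h0 : f 0 ≤ g 0)
    (hderiv : ∀ x, 0 < x → deriv f x ≤ deriv g x) {x : ℝ} (hx : 0 ≤ x) : f x ≤ g x := by
  have hmono : MonotoneOn (g - f) (Set.Ici 0) := by
    refine monotoneOn_of_deriv_nonneg (convex_Ici 0) (hg.sub hf).continuous.continuousOn
      (hg.sub hf).differentiableOn fun y hy => ?_
    rw [interior_Ici] at hy
    rw [deriv_sub (hg y) (hf y)]
    exact sub_nonneg.2 (hderiv y hy)
  have := hmono Set.self_mem_Ici hx hx
  simp only [Pi.sub_apply] at this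
  linarith

lemma cos_le_taylor_four {x : ℝ} (hx : 0 ≤ x) : cos x ≤ 1 - x ^ 2 / 2 + x ^ 4 / 24 := by
  refine le_of_map_zero_le_of_deriv_le (f := cos)
    (g := fun x => 1 - x ^ 2 / 2 + x ^ 4 / 24)
    (by fun_prop) (by fun_prop) (by simp) (fun y hy => ?_) hx
  simp (disch := fun_prop) only [deriv_cos', deriv_fun_add, deriv_fun_sub, deriv_const',
    deriv_div_const, deriv_fun_pow, deriv_id'', Nat.cast_ofNat]
  nlinarith [sin_ge_sub_cube hy.le]

lemma sin_le_taylor_five {x : ℝ} (hx : 0 ≤ x) : sin x ≤ x - x ^ 3 / 6 + x ^ 5 / 120 := by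
  refine le_of_map_zero_le_of_deriv_le (f := sin)
    (g := fun x => x - x ^ 3 / 6 + x ^ 5 / 120)
    (by fun_prop) (by fun_prop) (by simp) (fun y hy => ?_) hx
  simp (disch := fun_prop) only [Real.deriv_sin, deriv_fun_add, deriv_fun_sub, deriv_id'',
    deriv_div_const, deriv_fun_pow, Nat.cast_ofNat]
  nlinarith [cos_le_taylor_four hy.le]

lemma taylor_six_le_cos {x : ℝ} (hx : 0 ≤ x) :
    1 - x ^ 2 / 2 + x ^ 4 / 24 - x ^ 6 / 720 ≤ cos x := by
  refine le_of_map_zero_le_of_deriv_le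
    (f := fun x => 1 - x ^ 2 / 2 + x ^ 4 / 24 - x ^ 6 / 720) (g := cos)
    (by fun_prop) (by fun_prop) (by simp) (fun y hy => ?_) hx
  simp (disch := fun_prop) only [deriv_cos', deriv_fun_add, deriv_fun_sub, deriv_const',
    deriv_div_const, deriv_fun_pow, deriv_id'', Nat.cast_ofNat]
  nlinarith [sin_le_taylor_five hy.le]

lemma taylor_seven_le_sin {x : ℝ} (hx : 0 ≤ x) :
    x - x ^ 3 / 6 + x ^ 5 / 120 - x ^ 7 / 5040 ≤ sin x := by
  refine le_of_map_zero_le_of_deriv_le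
    (f := fun x => x - x ^ 3 / 6 + x ^ 5 / 120 - x ^ 7 / 5040) (g := sin)
    (by fun_prop) (by fun_prop) (by simp) (fun y hy => ?_) hx
  simp (disch := fun_prop) only [Real.deriv_sin, deriv_fun_add, deriv_fun_sub, deriv_id'',
    deriv_div_const, deriv_fun_pow, Nat.cast_ofNat]
  nlinarith [taylor_six_le_cos hy.le]

lemma taylor_poly_lt_of_le_two {t : ℝ} (h0 : 0 < t) (h2 : t ≤ 2) :
    2 * π * (π - t - (t - t ^ 3 / 6 + t ^ 5 / 120 - t ^ 7 / 5040)) *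
        (t ^ 2 / 2 - t ^ 4 / 24 + t ^ 6 / 720) <
      (π - t) ^ 2 * t * (t - t ^ 3 / 6 + t ^ 5 / 120 - t ^ 7 / 5040) := by
  have hp1 : (3.141592 : ℝ) < π := pi_gt_d6
  have hp2 : π < 3.141593 := pi_lt_d6
  have ht : 0 ≤ t := h0.le
  have h2' : 0 ≤ 2 - t := by linarith
  -- the two sides differ by `t ^ 4` times this polynomial
  have hR : 0 < 1 - π ^ 2 / 12 - t ^ 2 / 6 + t ^ 2 * π ^ 2 / 180 + t ^ 3 * π / 90 + t ^ 4 / 120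
      - t ^ 4 * π ^ 2 / 5040 - 29 * t ^ 5 * π / 30240 - t ^ 6 / 5040 + t ^ 7 * π / 25200
      - t ^ 9 * π / 1814400 := by
    -- Bernstein basis of `[0, 2]`
    nlinarith [mul_nonneg (pow_nonneg ht 0) (pow_nonneg h2' 9),
      mul_nonneg (pow_nonneg ht 1) (pow_nonneg h2' 8),
      mul_nonneg (pow_nonneg ht 2) (pow_nonneg h2' 7),
      mul_nonneg (pow_nonneg ht 3) (pow_nonneg h2' 6),
      mul_nonneg (pow_nonneg ht 4) (pow_nonneg h2' 5),
      mul_nonneg (pow_nonneg ht 5) (pow_nonneg h2' 4),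
      mul_nonneg (pow_nonneg ht 6) (pow_nonneg h2' 3),
      mul_nonneg (pow_nonneg ht 7) (pow_nonneg h2' 2),
      mul_nonneg (pow_nonneg ht 8) (pow_nonneg h2' 1),
      mul_nonneg (pow_nonneg ht 9) (pow_nonneg h2' 0),
      mul_nonneg (pow_nonneg ht 2) (mul_nonneg (sub_pos.2 hp1).le (sub_pos.2 hp1).le),
      mul_nonneg (pow_nonneg ht 3) (sub_pos.2 hp1).le,
      mul_nonneg (pow_nonneg ht 5) (sub_pos.2 hp2).le,
      mul_nonneg (pow_nonneg ht 7) (sub_pos.2 hp1).le,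
      mul_nonneg (pow_nonneg ht 9) (sub_pos.2 hp2).le]
  nlinarith [mul_pos (pow_pos h0 4) hR]

lemma two_pi_mul_pi_sub_sub_sin_mul_lt_of_le_two {t : ℝ} (h0 : 0 < t) (h2 : t ≤ 2) :
    2 * π * (π - t - sin t) * (1 - cos t) < (π - t) ^ 2 * t * sin t := by
  have hπ : 3 < π := pi_gt_three
  have hsin := taylor_seven_le_sin h0.le
  have hcos := taylor_six_le_cos h0.le
  have hgap : 0 ≤ π - t - sin t := by linarith [sin_le_one t]
  calc 2 * π * (π - t - sin t) * (1 - cos t)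
      ≤ 2 * π * (π - t - (t - t ^ 3 / 6 + t ^ 5 / 120 - t ^ 7 / 5040)) *
          (t ^ 2 / 2 - t ^ 4 / 24 + t ^ 6 / 720) :=
        mul_le_mul (by gcongr) (by linarith) (by linarith [cos_le_one t])
          (mul_nonneg (by positivity) (by linarith))
    _ < (π - t) ^ 2 * t * (t - t ^ 3 / 6 + t ^ 5 / 120 - t ^ 7 / 5040) :=
        taylor_poly_lt_of_le_two h0 h2
    _ ≤ (π - t) ^ 2 * t * sin t := by gcongr

lemma taylor_poly_lt_of_le_pi_sub_two {y : ℝ} (h0 : 0 < y) (h2 : y ≤ π - 2) :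
    2 * π * (y ^ 3 / 6) * (2 - y ^ 2 / 2 + y ^ 4 / 24) < y ^ 2 * (π - y) * (y - y ^ 3 / 6) := by
  have hp : π < 3.141593 := pi_lt_d6
  have hy : 0 ≤ y := h0.le
  have h2' : 0 ≤ 3.141593 - 2 - y := by linarith
  -- the two sides differ by `y ^ 3` times this polynomial
  have hS : 0 < π / 3 - y + y ^ 3 / 6 - π * y ^ 4 / 72 := by
    nlinarith [mul_nonneg (pow_nonneg hy 0) (pow_nonneg h2' 4),
      mul_nonneg (pow_nonneg hy 1) (pow_nonneg h2' 3),
      mul_nonneg (pow_nonneg hy 2) (pow_nonneg h2' 2),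
      mul_nonneg (pow_nonneg hy 3) (pow_nonneg h2' 1),
      mul_nonneg (pow_nonneg hy 4) (pow_nonneg h2' 0),
      mul_nonneg (pow_nonneg hy 4) (sub_nonneg.2 hp.le)]
  nlinarith [mul_pos (pow_pos h0 3) hS]

lemma two_pi_mul_sub_sin_mul_one_add_cos_lt {y : ℝ} (h0 : 0 < y) (h2 : y ≤ π - 2) :
    2 * π * (y - sin y) * (1 + cos y) < y ^ 2 * (π - y) * sin y := by
  calc 2 * π * (y - sin y) * (1 + cos y)
      ≤ 2 * π * (y ^ 3 / 6) * (2 - y ^ 2 / 2 + y ^ 4 / 24) :=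
        mul_le_mul (by gcongr; linarith [sin_ge_sub_cube h0.le])
          (by linarith [cos_le_taylor_four h0.le])
          (by linarith [neg_one_le_cos y]) (by positivity)
    _ < y ^ 2 * (π - y) * (y - y ^ 3 / 6) := taylor_poly_lt_of_le_pi_sub_two h0 h2
    _ ≤ y ^ 2 * (π - y) * sin y :=
        mul_le_mul_of_nonneg_left (sin_ge_sub_cube h0.le) (mul_nonneg (sq_nonneg y) (by linarith))

lemma two_pi_mul_pi_sub_sub_sin_mul_lt {t : ℝ} (h0 : 0 < t) (hπ : t < π) :
    2 * π * (π - t - sin t) * (1 - cos t) < (π - t) ^ 2 * t * sin t := by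
  rcases le_or_gt t 2 with h2 | h2
  · exact two_pi_mul_pi_sub_sub_sin_mul_lt_of_le_two h0 h2
  · have h := two_pi_mul_sub_sin_mul_one_add_cos_lt (y := π - t) (by linarith) (by linarith)
    rw [sin_pi_sub, cos_pi_sub, sub_sub_cancel] at h
    convert h using 1; ring

lemma two_pi_mul_pi_sub_sub_sin_lt_mul_cot_half {t : ℝ} (h0 : 0 < t) (hπ : t < π) :
    2 * π * (π - t - sin t) < (π - t) ^ 2 * t * cot (t / 2) := by
  have hσ : 0 < sin (t / 2) := sin_pos_of_pos_of_lt_pi (by linarith) (by linarith)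
  have hsin : sin t = 2 * sin (t / 2) * cos (t / 2) := by rw [← sin_two_mul]; ring_nf
  have hcos : cos t = cos (t / 2) ^ 2 - sin (t / 2) ^ 2 := by rw [← cos_two_mul']; ring_nf
  have h := two_pi_mul_pi_sub_sub_sin_mul_lt h0 hπ
  rw [show 1 - cos t = 2 * sin (t / 2) ^ 2 by linear_combination -hcos - sin_sq_add_cos_sq (t / 2)]
    at h
  rw [cot_eq_cos_div_sin, mul_div_assoc', lt_div_iff₀ hσ]
  refine lt_of_mul_lt_mul_left ?_ (by positivity : (0 : ℝ) ≤ 2 * sin (t / 2))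
  rw [hsin] at h ⊢
  linarith

noncomputable def gHat (s t : ℝ) : ℝ :=
  (2 * (t ^ 2 * (1 + s) - (s - 1) * π ^ 2) * cot (t / 2) +
    t * (t - π) * (t * (1 + s) + π * (1 - s)) * (1 / sin (t / 2)) ^ 2) / (t - π) ^ 2

theorem hasDerivAt_gHat (s : ℝ) {t : ℝ} (hsin : sin (t / 2) ≠ 0) (hπ : t ≠ π) :
    HasDerivAt (gHat s)
      (-(((s - 1) * π - (1 + s) * t) * (1 / sin (t / 2)) ^ 2 / (π - t) ^ 3 *
        ((π - t) ^ 2 * t * cot (t / 2) + 2 * π * (t + sin t - π)))) t := by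
  have hquot : gHat s = fun t => (2 * (t ^ 2 * (1 + s) - (s - 1) * π ^ 2) *
      (cos (t / 2) * sin (t / 2)) + t * (t - π) * (t * (1 + s) + π * (1 - s))) /
        ((t - π) ^ 2 * sin (t / 2) ^ 2) := by
    -- both sides are junk `0` where `sin (x / 2) = 0` or `x = π`
    funext x
    rw [gHat, cot_eq_cos_div_sin]
    rcases eq_or_ne (sin (x / 2)) 0 with h | h
    · simp [h]
    rcases eq_or_ne (x - π) 0 with h' | h'
    · simp [h']
    field_simp
  have hhalf : HasDerivAt (fun t : ℝ => t / 2) (1 / 2) t := (hasDerivAt_id t).div_const 2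
  have hx := hasDerivAt_id' (x := t)
  have hN := ((((hx.pow 2).mul_const (1 + s)).sub_const ((s - 1) * π ^ 2)).const_mul 2).mul
    (hhalf.cos.mul hhalf.sin) |>.add ((hx.mul (hx.sub_const π)).mul
      ((hx.mul_const (1 + s)).add_const (π * (1 - s))))
  have hD := ((hx.sub_const π).pow 2).mul (hhalf.sin.pow 2)
  have hD0 : (t - π) ^ 2 * sin (t / 2) ^ 2 ≠ 0 := by
    have : t - π ≠ 0 := sub_ne_zero.2 hπ
    positivity
  rw [hquot]
  refine (hN.div hD hD0).congr_deriv ?_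
  have hsin_two : sin t = 2 * sin (t / 2) * cos (t / 2) := by
    rw [← sin_two_mul]; ring_nf
  have hπt : π - t ≠ 0 := sub_ne_zero.2 hπ.symm
  rw [cot_eq_cos_div_sin, hsin_two]
  simp only [Pi.mul_apply, Pi.add_apply, Pi.pow_apply]
  push_cast
  field_simp
  linear_combination
    (-(t ^ 2 * (1 + s) - (s - 1) * π ^ 2) * sin (t / 2) * (t - π) * (π - t) ^ 3) *
      sin_sq_add_cos_sq (t / 2)

theorem stmt_17 (s : ℝ) (hs : 2 < s) :
    ∀ t₂ ∈ Set.Ioo (0 : ℝ) ((s - 2) * π / s), t₂ < (s - 1) * π / (s + 1) →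
      deriv (fun t : ℝ =>
        (2 * (t ^ 2 * (1 + s) - (s - 1) * π ^ 2) * Real.cot (t / 2) +
          t * (t - π) * (t * (1 + s) + π * (1 - s)) * (1 / Real.sin (t / 2)) ^ 2) /
            (t - π) ^ 2) t₂ < 0 := by
  rintro t ⟨h0, hub⟩ hlt
  have hπ : t < π := hub.trans <| (div_lt_iff₀ (by linarith)).2 (by nlinarith [pi_pos])
  have hK : 0 < (s - 1) * π - (1 + s) * t := by
    rw [lt_div_iff₀ (by linarith)] at hlt
    linarith
  have hσ : 0 < sin (t / 2) := sin_pos_of_pos_of_lt_pi (by linarith) (by linarith)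
  have hbracket : 0 < (π - t) ^ 2 * t * cot (t / 2) + 2 * π * (t + sin t - π) := by
    linarith [two_pi_mul_pi_sub_sub_sin_lt_mul_cot_half h0 hπ]
  have hπt : 0 < π - t := sub_pos.2 hπ
  show deriv (gHat s) t < 0
  rw [(hasDerivAt_gHat s hσ.ne' hπ.ne).deriv]
  exact neg_neg_of_pos (mul_pos (div_pos (mul_pos hK (by positivity)) (by positivity)) hbracket)
end
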